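/- arXiv:1610.04825 — 2 statements merged into one kernel-verified Lean document; each statement's English description precedes it below -/
import Mathlib

section
/- Let x_k(t) = C_m(t)·sin(φ+t) − S_m(t)·cos(φ+t) and y_k(t) = C_m(t)·cos(φ+t) + S_m(t)·sin(φ+t) for k = 2m, m ≥ 1. Then x_k'(t) = (-1)^m (t^{2m}/(2m)!)·cos(φ+t) and y_k'(t) = (-1)^{m+1} (t^{2m}/(2m)!)·sin(φ+t). -/
open Real

/-- Partial sum of the cosine Taylor series: first `n+1` terms. -/
noncomputable def Cser (n : ℕ) (t : ℝ) : ℝ :=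
  ∑ i ∈ Finset.range (n + 1), (-1 : ℝ) ^ i * t ^ (2 * i) / (2 * i).factorial

/-- Partial sum of the sine Taylor series: first `n` terms. -/
noncomputable def Sser (n : ℕ) (t : ℝ) : ℝ :=
  ∑ i ∈ Finset.range n, (-1 : ℝ) ^ i * t ^ (2 * i + 1) / (2 * i + 1).factorial

/-! Termwise differentiation gives `C_m' = -S_m` and `S_m' = C_m - (-1)^m t^(2m)/(2m)!`; in
the product rule for `x_k` and `y_k` everything then cancels except this defect of `S_m`. -/

theorem hasDerivAt_pow_succ_div_factorial (k : ℕ) (t : ℝ) :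
    HasDerivAt (fun t : ℝ => t ^ (k + 1) / (k + 1).factorial) (t ^ k / k.factorial) t := by
  refine ((hasDerivAt_pow (k + 1) t).div_const ((k + 1).factorial : ℝ)).congr_deriv ?_
  rw [Nat.factorial_succ, Nat.cast_mul, Nat.add_sub_cancel]
  field_simp

theorem hasDerivAt_Cser (n : ℕ) (t : ℝ) : HasDerivAt (Cser n) (-Sser n t) t := by
  have hsum := (HasDerivAt.fun_sum (u := Finset.range n) fun i _ =>
    (hasDerivAt_pow_succ_div_factorial (2 * i + 1) t).const_mul ((-1 : ℝ) ^ (i + 1))).add_const 1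
  have hCser : Cser n = fun y => ∑ i ∈ Finset.range n,
      (-1 : ℝ) ^ (i + 1) * (y ^ (2 * i + 1 + 1) / (2 * i + 1 + 1).factorial) + 1 := by
    funext y
    simp [Cser, Finset.sum_range_succ', mul_div_assoc, Nat.mul_succ]
  rw [hCser]
  refine hsum.congr_deriv ?_
  simp only [Sser, ← Finset.sum_neg_distrib, pow_succ]
  refine Finset.sum_congr rfl fun i _ => ?_
  ring

theorem hasDerivAt_Sser (n : ℕ) (t : ℝ) :
    HasDerivAt (Sser n) (Cser n t - (-1) ^ n * (t ^ (2 * n) / (2 * n).factorial)) t := by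
  have hsum := HasDerivAt.fun_sum (u := Finset.range n) fun i _ =>
    (hasDerivAt_pow_succ_div_factorial (2 * i) t).const_mul ((-1 : ℝ) ^ i)
  rw [Cser, Finset.sum_range_succ, ← mul_div_assoc, add_sub_cancel_right]
  simp only [← mul_div_assoc] at hsum
  exact hsum

theorem deriv_even_involute_general (φ : ℝ) (m : ℕ) (t : ℝ) :
    deriv (fun t => Cser m t * Real.sin (φ + t) - Sser m t * Real.cos (φ + t)) t
      = (-1 : ℝ) ^ m * (t ^ (2 * m) / (2 * m).factorial) * Real.cos (φ + t) ∧
    deriv (fun t => Cser m t * Real.cos (φ + t) + Sser m t * Real.sin (φ + t)) t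
      = (-1 : ℝ) ^ (m + 1) * (t ^ (2 * m) / (2 * m).factorial) * Real.sin (φ + t) := by
  have hC := hasDerivAt_Cser m t
  have hS := hasDerivAt_Sser m t
  have hsin := ((hasDerivAt_id' t).const_add φ).sin
  have hcos := ((hasDerivAt_id' t).const_add φ).cos
  constructor
  · exact ((hC.mul hsin).sub (hS.mul hcos)).deriv.trans (by ring)
  · exact ((hC.mul hcos).add (hS.mul hsin)).deriv.trans (by ring)

theorem deriv_even_involute (φ : ℝ) (m : ℕ) (hm : 1 ≤ m) (t : ℝ) :
    deriv (fun t => Cser m t * Real.sin (φ + t) - Sser m t * Real.cos (φ + t)) t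
      = (-1 : ℝ) ^ m * (t ^ (2 * m) / (2 * m).factorial) * Real.cos (φ + t) ∧
    deriv (fun t => Cser m t * Real.cos (φ + t) + Sser m t * Real.sin (φ + t)) t
      = (-1 : ℝ) ^ (m + 1) * (t ^ (2 * m) / (2 * m).factorial) * Real.sin (φ + t) :=
  deriv_even_involute_general φ m t
end

section
/- The involute of the curve x(t) = sin(φ+t) − t·cos(φ+t), y(t) = cos(φ+t) + t·sin(φ+t) (the first involute of the unit circle arc), with unwinding from t = 0, is given by x(t) = sin(φ+t) − t·cos(φ+t) − (t²/2)·sin(φ+t) and y(t) = cos(φ+t) + t·sin(φ+t) − (t²/2)·cos(φ+t), for t > 0. -/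
/-! The first involute of the circle has velocity `t • (sin (φ + t), cos (φ + t))`, so its speed
is `|t|` and its arc length from `0` is `t * |t| / 2`. Subtracting arc length times the unit
tangent therefore subtracts `(t ^ 2 / 2) • (sin (φ + t), cos (φ + t))`. -/

open Real

lemma hasDerivAt_sin_sub_mul_cos (φ u : ℝ) :
    HasDerivAt (fun v => sin (φ + v) - v * cos (φ + v)) (u * sin (φ + u)) u := by
  have hθ : HasDerivAt (fun v => φ + v) 1 u := (hasDerivAt_id u).const_add φ
  exact (hθ.sin.sub ((hasDerivAt_id' u).mul hθ.cos)).congr_deriv (by ring)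

lemma hasDerivAt_cos_add_mul_sin (φ u : ℝ) :
    HasDerivAt (fun v => cos (φ + v) + v * sin (φ + v)) (u * cos (φ + u)) u := by
  have hθ : HasDerivAt (fun v => φ + v) 1 u := (hasDerivAt_id u).const_add φ
  exact (hθ.cos.add ((hasDerivAt_id' u).mul hθ.sin)).congr_deriv (by ring)

lemma sqrt_mul_sin_sq_add_mul_cos_sq (r θ : ℝ) :
    √((r * sin θ) ^ 2 + (r * cos θ) ^ 2) = |r| := by
  rw [mul_pow, mul_pow, ← mul_add, sin_sq_add_cos_sq, mul_one, sqrt_sq_eq_abs]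

lemma integral_zero_abs (t : ℝ) : ∫ u in (0 : ℝ)..t, |u| = t * |t| / 2 := by
  rcases le_total 0 t with ht | ht
  · rw [intervalIntegral.integral_congr (g := fun u => u) fun u hu => abs_of_nonneg ?_]
    · rw [integral_id, abs_of_nonneg ht]
      ring
    · rw [Set.uIcc_of_le ht] at hu
      exact hu.1
  · rw [intervalIntegral.integral_congr (g := fun u => -u) fun u hu => abs_of_nonpos ?_]
    · rw [intervalIntegral.integral_neg, integral_id, abs_of_nonpos ht]
      ring
    · rw [Set.uIcc_of_ge ht] at hu
      exact hu.2

lemma mul_abs_div_two_mul_mul_div_abs (t a : ℝ) : t * |t| / 2 * (t * a) / |t| = t ^ 2 / 2 * a := by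
  rcases eq_or_ne t 0 with rfl | ht
  · simp
  · field_simp [abs_ne_zero.mpr ht]

theorem involute_of_first_involute_general (φ t : ℝ) :
    (letI f : ℝ → ℝ := fun v => Real.sin (φ + v) - v * Real.cos (φ + v)
     letI g : ℝ → ℝ := fun v => Real.cos (φ + v) + v * Real.sin (φ + v)
     letI s : ℝ → ℝ := fun v => ∫ u in (0:ℝ)..v, Real.sqrt ((deriv f u) ^ 2 + (deriv g u) ^ 2)
     (f t - s t * deriv f t / Real.sqrt ((deriv f t) ^ 2 + (deriv g t) ^ 2)
        = Real.sin (φ + t) - t * Real.cos (φ + t) - (t ^ 2 / 2) * Real.sin (φ + t)) ∧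
     (g t - s t * deriv g t / Real.sqrt ((deriv f t) ^ 2 + (deriv g t) ^ 2)
        = Real.cos (φ + t) + t * Real.sin (φ + t) - (t ^ 2 / 2) * Real.cos (φ + t))) := by
  simp only [fun u => (hasDerivAt_sin_sub_mul_cos φ u).deriv,
    fun u => (hasDerivAt_cos_add_mul_sin φ u).deriv, sqrt_mul_sin_sq_add_mul_cos_sq,
    integral_zero_abs, mul_abs_div_two_mul_mul_div_abs, and_self]

theorem involute_of_first_involute (φ t : ℝ) (ht : 0 < t) :
    (letI f : ℝ → ℝ := fun v => Real.sin (φ + v) - v * Real.cos (φ + v)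
     letI g : ℝ → ℝ := fun v => Real.cos (φ + v) + v * Real.sin (φ + v)
     letI s : ℝ → ℝ := fun v => ∫ u in (0:ℝ)..v, Real.sqrt ((deriv f u) ^ 2 + (deriv g u) ^ 2)
     (f t - s t * deriv f t / Real.sqrt ((deriv f t) ^ 2 + (deriv g t) ^ 2)
        = Real.sin (φ + t) - t * Real.cos (φ + t) - (t ^ 2 / 2) * Real.sin (φ + t)) ∧
     (g t - s t * deriv g t / Real.sqrt ((deriv f t) ^ 2 + (deriv g t) ^ 2)
        = Real.cos (φ + t) + t * Real.sin (φ + t) - (t ^ 2 / 2) * Real.cos (φ + t))) :=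
  involute_of_first_involute_general φ t
end
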